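/- arXiv:2510.25398 — 5 statements merged into one kernel-verified Lean document; each statement's English description precedes it below -/
import Mathlib

section
/- 0 is an eigenvalue of the matrix D+B with eigenvector e (the all-ones vector); the kernel of D+B is one-dimensional, spanned by e; and every complex eigenvalue λ ≠ 0 of D+B satisfies Re λ < 0. -/
/-!
`L = D + B` has nonnegative off-diagonal entries and zero row sums. For the kernel, a maximum
principle: if `L v = 0` and `v` is maximal at `i`, then `0 = (L v) i = ∑ⱼ L i j (v j - v i)` is
a sum of nonpositive terms, so `v` is also maximal at every out-neighbour of `i`; strong
connectivity spreads the maximum everywhere. For the spectrum, the Gershgorin disc of row `k` is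
centred at `L k k = -rₖ` with radius `rₖ = ∑_{j ≠ k} L k j`, and the only point of such a disc
with `Re ≥ 0` is `0`.
-/

open Matrix Finset

/-- The diagonal matrix of outflows: `D i i = -∑_{j ≠ i} B i j`. -/
noncomputable def Dmat {n : ℕ} (B : Matrix (Fin n) (Fin n) ℝ) : Matrix (Fin n) (Fin n) ℝ :=
  Matrix.diagonal fun i => -∑ j ∈ Finset.univ.erase i, B i j

/-- Strong connectivity of the directed graph with an edge `i → j` whenever `B i j > 0`. -/
def StronglyConnected {n : ℕ} (B : Matrix (Fin n) (Fin n) ℝ) : Prop :=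
  ∀ i j : Fin n, Relation.ReflTransGen (fun a b => 0 < B a b) i j

theorem Complex.re_neg_of_mem_closedBall {a : ℝ} {μ : ℂ} (hμ : μ ∈ Metric.closedBall (a : ℂ) (-a))
    (hμ0 : μ ≠ 0) : μ.re < 0 := by
  rw [mem_closedBall_iff_norm] at hμ
  have ha : 0 ≤ -a := (norm_nonneg _).trans hμ
  have hsq := sq_le_sq' (by linarith [norm_nonneg (μ - a)]) hμ
  rw [Complex.sq_norm, Complex.normSq_apply] at hsq
  simp only [sub_re, ofReal_re, sub_im, ofReal_im, sub_zero] at hsq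
  by_contra! hre
  have hre0 : μ.re = 0 := by nlinarith [mul_nonneg hre ha, sq_nonneg μ.im]
  have him0 : μ.im = 0 := by nlinarith [mul_nonneg hre ha, sq_nonneg μ.re]
  exact hμ0 (Complex.ext hre0 him0)

namespace Matrix

variable {ι : Type*} [Fintype ι] {A : Matrix ι ι ℝ}

theorem sum_row_eq_zero_of_mulVec_one_eq_zero (hrow : A *ᵥ 1 = 0) (i : ι) :
    ∑ j, A i j = 0 := by
  simpa [mulVec, dotProduct] using congrFun hrow i

theorem diag_eq_neg_sum_erase_of_mulVec_one_eq_zero [DecidableEq ι] (hrow : A *ᵥ 1 = 0)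
    (i : ι) : A i i = -∑ j ∈ univ.erase i, A i j := by
  linarith [add_sum_erase univ (A i) (mem_univ i), sum_row_eq_zero_of_mulVec_one_eq_zero hrow i]

theorem mulVec_apply_eq_sum_mul_sub (hrow : A *ᵥ 1 = 0) (v : ι → ℝ) (i : ι) :
    (A *ᵥ v) i = ∑ j, A i j * (v j - v i) := by
  have h : ∑ j, A i j * v i = 0 := by
    rw [← sum_mul, sum_row_eq_zero_of_mulVec_one_eq_zero hrow, zero_mul]
  simp only [mul_sub, sum_sub_distrib, h, sub_zero, mulVec, dotProduct]

theorem apply_eq_of_mulVec_eq_zero_of_forall_le (hoff : ∀ i j, i ≠ j → 0 ≤ A i j)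
    (hrow : A *ᵥ 1 = 0) {v : ι → ℝ} (hv : A *ᵥ v = 0) {i j : ι} (hmax : ∀ k, v k ≤ v i)
    (hij : 0 < A i j) : v j = v i := by
  have hterm : ∀ k ∈ univ, A i k * (v k - v i) ≤ 0 := fun k _ => by
    rcases eq_or_ne i k with rfl | hik
    · simp
    · exact mul_nonpos_of_nonneg_of_nonpos (hoff i k hik) (sub_nonpos.mpr (hmax k))
  have hsum : ∑ k, A i k * (v k - v i) = 0 := by
    rw [← mulVec_apply_eq_sum_mul_sub hrow, hv, Pi.zero_apply]
  have := (sum_eq_zero_iff_of_nonpos hterm).mp hsum j (mem_univ j)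
  rw [mul_eq_zero] at this
  exact sub_eq_zero.mp (this.resolve_left hij.ne')

theorem exists_eq_smul_one_of_mulVec_eq_zero (hoff : ∀ i j, i ≠ j → 0 ≤ A i j)
    (hrow : A *ᵥ 1 = 0) (hconn : ∀ i j, Relation.ReflTransGen (fun a b => 0 < A a b) i j)
    {v : ι → ℝ} (hv : A *ᵥ v = 0) : ∃ c : ℝ, v = c • 1 := by
  cases isEmpty_or_nonempty ι
  · exact ⟨0, Subsingleton.elim _ _⟩
  obtain ⟨i, -, hmax⟩ := exists_max_image univ v univ_nonempty
  refine ⟨v i, funext fun j => ?_⟩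
  have hconst : ∀ k, Relation.ReflTransGen (fun a b => 0 < A a b) i k → v k = v i := by
    intro k hk
    induction hk with
    | refl => rfl
    | tail _ hedge ih =>
      rw [apply_eq_of_mulVec_eq_zero_of_forall_le hoff hrow hv (fun k => ih ▸ hmax k (mem_univ k))
        hedge, ih]
  simpa using hconst j (hconn i j)

theorem re_neg_of_map_ofReal_mulVec_eq_smul [DecidableEq ι] (hoff : ∀ i j, i ≠ j → 0 ≤ A i j)
    (hrow : A *ᵥ 1 = 0) {μ : ℂ} {v : ι → ℂ} (hv : v ≠ 0)
    (heig : A.map Complex.ofReal *ᵥ v = μ • v) (hμ : μ ≠ 0) : μ.re < 0 := by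
  have hμA : Module.End.HasEigenvalue (toLin' (A.map Complex.ofReal)) μ :=
    Module.End.hasEigenvalue_of_hasEigenvector
      ⟨Module.End.mem_eigenspace_iff.mpr (by rwa [toLin'_apply]), hv⟩
  obtain ⟨k, hk⟩ := eigenvalue_mem_ball hμA
  have hrad : ∑ j ∈ univ.erase k, ‖A.map Complex.ofReal k j‖ = -A k k := by
    rw [diag_eq_neg_sum_erase_of_mulVec_one_eq_zero hrow, neg_neg]
    refine sum_congr rfl fun j hj => ?_
    rw [map_apply, Complex.norm_real, Real.norm_of_nonneg (hoff k j (ne_of_mem_erase hj).symm)]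
  rw [hrad, map_apply] at hk
  exact Complex.re_neg_of_mem_closedBall hk hμ

end Matrix

theorem Dmat_add_apply_of_ne {n : ℕ} (B : Matrix (Fin n) (Fin n) ℝ) {i j : Fin n} (hij : i ≠ j) :
    (Dmat B + B) i j = B i j := by
  simp [Dmat, diagonal_apply_ne _ hij]

theorem Dmat_add_mulVec_one {n : ℕ} {B : Matrix (Fin n) (Fin n) ℝ} (hdiag : ∀ i, B i i = 0) :
    (Dmat B + B) *ᵥ 1 = 0 := by
  funext i
  rw [add_mulVec, Pi.add_apply, Dmat, mulVec_diagonal, mulVec, dotProduct,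
    ← add_sum_erase _ _ (mem_univ i), hdiag]
  simp

theorem stmt0_general {n : ℕ} (B : Matrix (Fin n) (Fin n) ℝ)
    (hB : ∀ i j, 0 ≤ B i j) (hdiag : ∀ i, B i i = 0)
    (hconn : StronglyConnected B) :
    (Dmat B + B) *ᵥ (fun _ => (1 : ℝ)) = 0 ∧
    (∀ v : Fin n → ℝ, (Dmat B + B) *ᵥ v = 0 → ∃ c : ℝ, v = c • (fun _ => (1 : ℝ))) ∧
    (∀ (μ : ℂ) (v : Fin n → ℂ), v ≠ 0 →
      ((Dmat B + B).map (Complex.ofReal)) *ᵥ v = μ • v → μ ≠ 0 → μ.re < 0) := by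
  have hoff : ∀ i j, i ≠ j → 0 ≤ (Dmat B + B) i j := fun i j hij => by
    rw [Dmat_add_apply_of_ne B hij]
    exact hB i j
  have hrow := Dmat_add_mulVec_one hdiag
  have hconnL : ∀ i j, Relation.ReflTransGen (fun a b => 0 < (Dmat B + B) a b) i j :=
    fun i j => Relation.ReflTransGen.mono (fun a b (hab : 0 < B a b) => by
      rwa [Dmat_add_apply_of_ne B (by rintro rfl; exact hab.ne' (hdiag a))]) i j (hconn i j)
  exact ⟨hrow, fun v hv => exists_eq_smul_one_of_mulVec_eq_zero hoff hrow hconnL hv,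
    fun μ v hv heig hμ => re_neg_of_map_ofReal_mulVec_eq_smul hoff hrow hv heig hμ⟩

/-- 0 is an eigenvalue of `D + B` with eigenvector `e` (the all-ones vector), the kernel of
`D + B` is one-dimensional and spanned by `e`, and every complex eigenvalue `λ ≠ 0` of `D + B`
satisfies `Re λ < 0`. -/
theorem stmt0 {n : ℕ} (hn : 1 ≤ n) (B : Matrix (Fin n) (Fin n) ℝ)
    (hB : ∀ i j, 0 ≤ B i j) (hdiag : ∀ i, B i i = 0)
    (hconn : StronglyConnected B) :
    (Dmat B + B) *ᵥ (fun _ => (1 : ℝ)) = 0 ∧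
    (∀ v : Fin n → ℝ, (Dmat B + B) *ᵥ v = 0 → ∃ c : ℝ, v = c • (fun _ => (1 : ℝ))) ∧
    (∀ (μ : ℂ) (v : Fin n → ℂ), v ≠ 0 →
      ((Dmat B + B).map (Complex.ofReal)) *ᵥ v = μ • v → μ ≠ 0 → μ.re < 0) :=
  stmt0_general B hB hdiag hconn
end

section
/- Let f ≥ 2 be an integer and assume Γ > fρ. Set θ* := (ρ+Γ(σ−1))/(σf) and θ̂ := (ρ+Γ(σ−1))/(1+f(σ−1)). Then m* := [ (K/σ)(1−ρ/Γ) ]^{1/(σ−1)} is the unique m > 0 with Γ(1 − m^{σ−1}/K) = fθ*, m̂ := [ K(1−fρ/Γ)/(1+f(σ−1)) ]^{1/(σ−1)} is the unique m > 0 with Γ(1 − m^{σ−1}/K) = fθ̂, and 0 < m̂ < m* (the long-run total stock in the symmetric Markov equilibrium is strictly below the planner's long-run total stock). -/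
lemma solve_rpow (s : ℝ) (hs : 0 < s) (c : ℝ) (hc : 0 < c) :
    0 < c ^ ((1:ℝ)/s) ∧ (c ^ ((1:ℝ)/s)) ^ s = c ∧
      ∀ m : ℝ, 0 < m → m ^ s = c → m = c ^ ((1:ℝ)/s) := by
  refine ⟨Real.rpow_pos_of_pos hc _, ?_, ?_⟩
  · rw [← Real.rpow_mul hc.le]
    rw [one_div, inv_mul_cancel₀ hs.ne', Real.rpow_one]
  · intro m hm hms
    have : (m ^ s) ^ ((1:ℝ)/s) = m := by
      rw [← Real.rpow_mul hm.le, mul_one_div, div_self hs.ne', Real.rpow_one]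
    rw [← this, hms]

/-- In the logistic framework (S1)(U1) with `σ > 1`, `Γ > 0`, `K > 0`, `ρ > 0`, `f ≥ 2` and
`Γ > fρ`: `m* = ((K/σ)(1 − ρ/Γ))^{1/(σ−1)}` is the unique positive steady state of the
planner's closed-loop mass dynamics (`Γ(1 − m^{σ−1}/K) = fθ*`), `m̂` is the unique positive
steady state of the equilibrium dynamics (`Γ(1 − m^{σ−1}/K) = fθ̂`), and `0 < m̂ < m*`. -/
theorem stmt4 (σ Γ K ρ : ℝ) (hσ : 1 < σ) (hΓ : 0 < Γ) (hK : 0 < K) (hρ : 0 < ρ)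
    (f : ℕ) (hf : 2 ≤ f) (hΓρ : (f : ℝ) * ρ < Γ)
    (θstar θhat mstar mhat : ℝ)
    (hθstar : θstar = (ρ + Γ * (σ - 1)) / (σ * f))
    (hθhat : θhat = (ρ + Γ * (σ - 1)) / (1 + f * (σ - 1)))
    (hmstar : mstar = ((K / σ) * (1 - ρ / Γ)) ^ ((1 : ℝ) / (σ - 1)))
    (hmhat : mhat = (K * (1 - f * ρ / Γ) / (1 + f * (σ - 1))) ^ ((1 : ℝ) / (σ - 1))) :
    (0 < mstar ∧ Γ * (1 - mstar ^ (σ - 1) / K) = f * θstar ∧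
      ∀ m : ℝ, 0 < m → Γ * (1 - m ^ (σ - 1) / K) = f * θstar → m = mstar) ∧
    (0 < mhat ∧ Γ * (1 - mhat ^ (σ - 1) / K) = f * θhat ∧
      ∀ m : ℝ, 0 < m → Γ * (1 - m ^ (σ - 1) / K) = f * θhat → m = mhat) ∧
    0 < mhat ∧ mhat < mstar := by
  have hs : 0 < σ - 1 := by linarith
  have hf2 : (2:ℝ) ≤ (f:ℝ) := by exact_mod_cast hf
  have hρΓ : ρ < Γ := by nlinarith
  have hσ0 : 0 < σ := by linarith
  have hfs : 0 < 1 + (f:ℝ) * (σ - 1) := by nlinarith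
  have hcstar : 0 < (K / σ) * (1 - ρ / Γ) := by
    apply mul_pos (div_pos hK hσ0)
    rw [sub_pos, div_lt_one hΓ]; exact hρΓ
  have hchat : 0 < K * (1 - (f:ℝ) * ρ / Γ) / (1 + (f:ℝ) * (σ - 1)) := by
    apply div_pos _ hfs
    apply mul_pos hK
    rw [sub_pos, div_lt_one hΓ]; exact hΓρ
  have hf0 : (0:ℝ) < (f:ℝ) := by linarith
  have hfne : (f:ℝ) ≠ 0 := hf0.ne'
  obtain ⟨h1, h2, h3⟩ := solve_rpow (σ-1) hs _ hcstar
  obtain ⟨g1, g2, g3⟩ := solve_rpow (σ-1) hs _ hchat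
  rw [← hmstar] at h1 h2 h3
  rw [← hmhat] at g1 g2 g3
  have lin : ∀ t x : ℝ, Γ * (1 - x / K) = t ↔ x = K * (1 - t / Γ) := by
    intro t x
    constructor <;> intro h <;> [skip; skip] <;>
      · field_simp at h ⊢
        linarith
  have cs : K * (1 - ((f:ℝ) * θstar) / Γ) = (K / σ) * (1 - ρ / Γ) := by
    rw [hθstar]; field_simp; ring
  have ch : K * (1 - ((f:ℝ) * θhat) / Γ)
      = K * (1 - (f:ℝ) * ρ / Γ) / (1 + (f:ℝ) * (σ - 1)) := by
    rw [hθhat]; field_simp; ring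
  have eqstar : ∀ x : ℝ, (Γ * (1 - x / K) = f * θstar ↔ x = (K / σ) * (1 - ρ / Γ)) := by
    intro x; rw [lin, cs]
  have eqhat : ∀ x : ℝ, (Γ * (1 - x / K) = f * θhat
      ↔ x = K * (1 - (f:ℝ) * ρ / Γ) / (1 + (f:ℝ) * (σ - 1))) := by
    intro x; rw [lin, ch]
  refine ⟨⟨h1, (eqstar _).mpr h2, fun m hm hme => h3 m hm ((eqstar _).mp hme)⟩,
    ⟨g1, (eqhat _).mpr g2, fun m hm hme => g3 m hm ((eqhat _).mp hme)⟩, g1, ?_⟩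
  rw [hmstar, hmhat]
  apply Real.rpow_lt_rpow hchat.le _ (by positivity)
  have hdiff : K / σ * (1 - ρ / Γ) - K * (1 - (f:ℝ) * ρ / Γ) / (1 + (f:ℝ) * (σ - 1)) =
      K * ((f:ℝ) - 1) * ((σ - 1) * Γ + ρ) / (σ * Γ * (1 + (f:ℝ) * (σ - 1))) := by
    field_simp
    ring
  have hpos : 0 < K * ((f:ℝ) - 1) * ((σ - 1) * Γ + ρ) / (σ * Γ * (1 + (f:ℝ) * (σ - 1))) := by
    apply div_pos
    · apply mul_pos (mul_pos hK (by linarith)) (by nlinarith)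
    · positivity
  linarith [hdiff, hpos]
end

section
/- Let f ≥ 2 be an integer. (i) If σ > 1 and ρ + Γ(σ−1) > 0, then f·(ρ+Γ(σ−1))/(1+f(σ−1)) − f·(ρ+Γ(σ−1))/(σf) = (ρ+Γ(σ−1))(f−1)/(σ(1+f(σ−1))) > 0. (ii) If σ ∈ (0,1), ρ + δ(1−σ) > 0 and f(1−σ) < 1, then f·(ρ+δ(1−σ))/(1−f(1−σ)) − f·(ρ+δ(1−σ))/(σf) = (ρ+δ(1−σ))(f−1)/(σ(1−f(1−σ))) > 0. (iii) If ρ + Γ/K > 0, then f·(ρ+Γ/K) − (ρ+Γ/K) = (f−1)(ρ+Γ/K) > 0. In all three cases the aggregate extraction coefficient fθ̂ of the symmetric Markov equilibrium strictly exceeds the planner's aggregate coefficient fθ*. -/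
/-- The tragedy of the commons: in each of the three frameworks, the aggregate extraction
coefficient `fθ̂` of the symmetric Markov equilibrium strictly exceeds the planner's aggregate
coefficient `fθ*`, with the displayed closed forms for the difference `Δ_f`. -/
theorem stmt6 (σ Γ K δ ρ : ℝ) (f : ℕ) (hf : 2 ≤ f) :
    ((1 < σ → 0 < ρ + Γ * (σ - 1) →
      (f : ℝ) * ((ρ + Γ * (σ - 1)) / (1 + f * (σ - 1)))
        - f * ((ρ + Γ * (σ - 1)) / (σ * f))
        = (ρ + Γ * (σ - 1)) * (f - 1) / (σ * (1 + f * (σ - 1))) ∧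
      0 < (ρ + Γ * (σ - 1)) * (f - 1) / (σ * (1 + f * (σ - 1))))) ∧
    ((0 < σ → σ < 1 → 0 < ρ + δ * (1 - σ) → (f : ℝ) * (1 - σ) < 1 →
      (f : ℝ) * ((ρ + δ * (1 - σ)) / (1 - f * (1 - σ)))
        - f * ((ρ + δ * (1 - σ)) / (σ * f))
        = (ρ + δ * (1 - σ)) * (f - 1) / (σ * (1 - f * (1 - σ))) ∧
      0 < (ρ + δ * (1 - σ)) * (f - 1) / (σ * (1 - f * (1 - σ))))) ∧
    ((0 < ρ + Γ / K →
      (f : ℝ) * (ρ + Γ / K) - (ρ + Γ / K) = ((f : ℝ) - 1) * (ρ + Γ / K) ∧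
      0 < ((f : ℝ) - 1) * (ρ + Γ / K))) := by
  have hf2 : (2 : ℝ) ≤ (f : ℝ) := by exact_mod_cast hf
  have hf1 : (1 : ℝ) < (f : ℝ) := by linarith
  have hf0 : (0 : ℝ) < (f : ℝ) := by linarith
  refine ⟨?_, ?_, ?_⟩
  · intro hσ hpos
    have hσ0 : 0 < σ := by linarith
    have hden : 0 < 1 + (f : ℝ) * (σ - 1) := by nlinarith
    constructor
    · field_simp
      ring
    · exact div_pos (mul_pos hpos (by linarith)) (mul_pos hσ0 hden)
  · intro hσ0 hσ1 hpos hden'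
    have hden : 0 < 1 - (f : ℝ) * (1 - σ) := by linarith
    constructor
    · field_simp
      ring
    · exact div_pos (mul_pos hpos (by linarith)) (mul_pos hσ0 hden)
  · intro hpos
    exact ⟨by ring, by nlinarith⟩
end

section
/- Let θ ∈ ℝ. (i) The all-ones vector e satisfies (D+B − θEᵀ + fθI) e = 0; consequently there exists a nonzero real vector ζ_θ with (D+Bᵀ − θE + fθI) ζ_θ = 0. (ii) If v ∈ ℂⁿ is a generalized eigenvector of D+Bᵀ for an eigenvalue λ ≠ 0, i.e. v ≠ 0 and (D+Bᵀ − λI)^m v = 0 for some integer m ≥ 1, then the sum of the coordinates of v is zero, and (D+Bᵀ − θE + fθI − (λ+fθ)I)^m v = 0, i.e. v is a generalized eigenvector of D+Bᵀ − θE + fθI for the eigenvalue λ + fθ. -/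
open Matrix Finset

/-- The matrix `E = ξ eᵀ`, whose `i`-th row is the all-ones row for `i ∈ F` and zero
otherwise. -/
def Emat {n : ℕ} (F : Finset (Fin n)) : Matrix (Fin n) (Fin n) ℝ :=
  fun i _ => if i ∈ F then 1 else 0

lemma rowsum {n : ℕ} (B : Matrix (Fin n) (Fin n) ℝ) (hdiag : ∀ i, B i i = 0) (i : Fin n) :
    ∑ j, (Dmat B + B) i j = 0 := by
  simp only [Matrix.add_apply, Finset.sum_add_distrib]
  have h1 : ∑ j, Dmat B i j = -∑ j ∈ Finset.univ.erase i, B i j := by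
    simp [Dmat, Matrix.diagonal_apply, Finset.sum_ite_eq]
  have h2 : ∑ j, B i j = ∑ j ∈ Finset.univ.erase i, B i j := by
    rw [← Finset.add_sum_erase _ _ (Finset.mem_univ i), hdiag, zero_add]
  rw [h1, h2]; ring

/-- (i) the all-ones vector `e` is in the kernel of `D+B − θEᵀ + fθI`, hence the transpose
`D+Bᵀ − θE + fθI` has a nonzero real kernel vector `ζ_θ`; (ii) every generalized eigenvector
of `D+Bᵀ` for a nonzero eigenvalue `λ` has coordinate sum zero and is a generalized
eigenvector of `D+Bᵀ − θE + fθI` for the eigenvalue `λ + fθ`. -/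
theorem stmt12 {n : ℕ} (hn : 1 ≤ n) (B : Matrix (Fin n) (Fin n) ℝ)
    (hB : ∀ i j, 0 ≤ B i j) (hdiag : ∀ i, B i i = 0)
    (F : Finset (Fin n)) (hF : F.Nonempty) (θ : ℝ) :
    ((Dmat B + B - θ • (Emat F)ᵀ + ((F.card : ℝ) * θ) • 1) *ᵥ (fun _ => (1 : ℝ)) = 0 ∧
      ∃ ζθ : Fin n → ℝ, ζθ ≠ 0 ∧
        ((Dmat B + B)ᵀ - θ • Emat F + ((F.card : ℝ) * θ) • 1) *ᵥ ζθ = 0) ∧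
    (∀ (lam : ℂ) (v : Fin n → ℂ) (m : ℕ), lam ≠ 0 → v ≠ 0 → 1 ≤ m →
      (((Dmat B + B)ᵀ.map Complex.ofReal - lam • 1) ^ m) *ᵥ v = 0 →
      (∑ i, v i) = 0 ∧
      ((((Dmat B + B)ᵀ - θ • Emat F + ((F.card : ℝ) * θ) • 1).map Complex.ofReal
          - (lam + ((F.card : ℝ) * θ : ℝ)) • 1) ^ m) *ᵥ v = 0) := by

  have hAe : (Dmat B + B - θ • (Emat F)ᵀ + ((F.card : ℝ) * θ) • 1) *ᵥ (fun _ => (1 : ℝ)) = 0 := by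
    funext i
    simp only [Matrix.mulVec, dotProduct, Matrix.sub_apply, Matrix.add_apply,
      Matrix.smul_apply, Matrix.transpose_apply, Emat, Matrix.one_apply, smul_eq_mul, mul_one,
      Pi.zero_apply]
    rw [Finset.sum_add_distrib, Finset.sum_sub_distrib]
    have h1 := rowsum B hdiag i
    simp only [Matrix.add_apply] at h1
    have h2 : ∑ x : Fin n, θ * (if x ∈ F then (1:ℝ) else 0) = θ * F.card := by
      rw [← Finset.mul_sum]
      simp
    have h3 : ∑ x : Fin n, (F.card : ℝ) * θ * (if i = x then (1:ℝ) else 0) = (F.card : ℝ) * θ := by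
      simp
    rw [h1, h2, h3]
    ring
  constructor
  · refine ⟨hAe, ?_⟩
    have hdet : (Dmat B + B - θ • (Emat F)ᵀ + ((F.card : ℝ) * θ) • 1).det = 0 := by
      rw [← Matrix.exists_mulVec_eq_zero_iff]
      exact ⟨fun _ => 1, by intro h; have := congrFun h ⟨0, hn⟩; simpa using this, hAe⟩
    have hdetT : ((Dmat B + B)ᵀ - θ • Emat F + ((F.card : ℝ) * θ) • 1).det = 0 := by
      have : (Dmat B + B)ᵀ - θ • Emat F + ((F.card : ℝ) * θ) • 1 =
          (Dmat B + B - θ • (Emat F)ᵀ + ((F.card : ℝ) * θ) • 1)ᵀ := by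
        simp [Matrix.transpose_add, Matrix.transpose_sub, Matrix.transpose_smul,
          Matrix.transpose_transpose, Matrix.transpose_one]
      rw [this, Matrix.det_transpose]; exact hdet
    obtain ⟨v, hv, hveq⟩ := Matrix.exists_mulVec_eq_zero_iff.2 hdetT
    exact ⟨v, hv, hveq⟩
  · intro lam v m hlam hv hm hgen
    set Aℂ : Matrix (Fin n) (Fin n) ℂ := (Dmat B + B)ᵀ.map Complex.ofReal with hAdef
    set N : Matrix (Fin n) (Fin n) ℂ := Aℂ - lam • 1 with hNdef
    -- column sums of Aℂ are zero
    have hcol : ∀ w : Fin n → ℂ, ∑ i, (Aℂ *ᵥ w) i = 0 := by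
      intro w
      simp only [Matrix.mulVec, dotProduct, hAdef, Matrix.map_apply,
        Matrix.transpose_apply]
      rw [Finset.sum_comm]
      have key : ∀ j : Fin n, ∑ i : Fin n, ((Dmat B j i : ℂ) + (B j i : ℂ)) * w j = 0 := by
        intro j
        rw [← Finset.sum_mul]
        have h0 : ((∑ i : Fin n, (Dmat B j i + B j i) : ℝ) : ℂ) = 0 := by
          have h1 := rowsum B hdiag j
          simp only [Matrix.add_apply] at h1
          rw [h1, Complex.ofReal_zero]
        push_cast at h0
        rw [h0, zero_mul]
      simp only [Matrix.add_apply, Complex.ofReal_add]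
      simp [key]
    have hNsum : ∀ w : Fin n → ℂ, ∑ i, (N *ᵥ w) i = -lam * ∑ i, w i := by
      intro w
      rw [hNdef, Matrix.sub_mulVec]
      simp only [Pi.sub_apply, Finset.sum_sub_distrib, hcol, Matrix.smul_mulVec,
        Matrix.one_mulVec, Pi.smul_apply, smul_eq_mul, ← Finset.mul_sum]
      ring
    have hNk : ∀ k : ℕ, ∑ i, ((N ^ k) *ᵥ v) i = (-lam) ^ k * ∑ i, v i := by
      intro k
      induction k with
      | zero => simp
      | succ k ih =>
        rw [pow_succ', ← Matrix.mulVec_mulVec, hNsum, ih]; ring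
    have hsumv : ∑ i, v i = 0 := by
      have h0 := hNk m
      rw [hgen] at h0
      simp only [Pi.zero_apply, Finset.sum_const_zero] at h0
      have : (-lam) ^ m ≠ 0 := pow_ne_zero _ (neg_ne_zero.2 hlam)
      exact (mul_eq_zero.1 h0.symm).resolve_left this
    refine ⟨hsumv, ?_⟩
    set P : Matrix (Fin n) (Fin n) ℂ :=
      ((Dmat B + B)ᵀ - θ • Emat F + ((F.card : ℝ) * θ) • 1).map Complex.ofReal
        - (lam + ((F.card : ℝ) * θ : ℝ)) • 1 with hPdef
    set Eℂ : Matrix (Fin n) (Fin n) ℂ := (Emat F).map Complex.ofReal with hEdef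
    have hPeq : P = N - (θ : ℂ) • Eℂ := by
      ext i j
      simp [hPdef, hNdef, hAdef, hEdef, Matrix.map_apply, Matrix.sub_apply, Matrix.add_apply,
        Matrix.smul_apply, Matrix.one_apply, smul_eq_mul]
      by_cases hij : i = j <;> simp [hij] <;> push_cast <;> ring
    have hEmul : ∀ w : Fin n → ℂ, (∑ i, w i) = 0 → Eℂ *ᵥ w = 0 := by
      intro w hw
      funext i
      simp only [Matrix.mulVec, dotProduct, hEdef, Matrix.map_apply, Emat,
        Pi.zero_apply]
      by_cases hi : i ∈ F <;> simp [hi, hw]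
    have key : ∀ k : ℕ, (P ^ k) *ᵥ v = (N ^ k) *ᵥ v := by
      intro k
      induction k with
      | zero => rfl
      | succ k ih =>
        rw [pow_succ', pow_succ', ← Matrix.mulVec_mulVec, ← Matrix.mulVec_mulVec, ih, hPeq,
          Matrix.sub_mulVec, Matrix.smul_mulVec,
          hEmul _ (by rw [hNk, hsumv, mul_zero]), smul_zero, sub_zero]
    rw [key, hgen]
end

section
/- Set u(c) := c^{1−σ}/(1−σ) and H(p) := (σ/(1−σ)) ∑_{i∈F} p_i^{1−1/σ} for vectors p with p_i > 0 for i ∈ F. Let v : ℝⁿ₊ \ {0} → ℝ be continuously differentiable with ∂v/∂x_i(x) > 0 for all i ∈ F and all x ∈ ℝⁿ₊ \ {0}, and suppose v satisfies ρ v(x) = H(∇v(x)) + ⟨∇v(x), (D+Bᵀ)x⟩ + (⟨e,x⟩^{σ−1} − δ)⟨∇v(x), x⟩ for every x ∈ ℝⁿ₊ \ {0}. Let x ∈ ℝⁿ₊ \ {0} and let (c,X) be an admissible pair with ⟨e,X(s)⟩ > 0 for all s ≥ 0. Then for every t ≥ 0: v(x) = ∫₀ᵗ e^{−ρs} [ H(∇v(X(s)))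 − ∑_{i∈F} ( u(c_i(s)) − c_i(s)·∂v/∂x_i(X(s)) ) ] ds + ∫₀ᵗ e^{−ρs} ∑_{i∈F} u(c_i(s)) ds + e^{−ρt} v(X(t)). -/
/-!
Along an admissible pair the trajectory is the integral of its velocity `g = drift - c`, hence
absolutely continuous with `X' = g` a.e.; a `C¹` function is locally Lipschitz on the convex cone
of nonnegative states of positive mass, so `s ↦ e^{-ρs} v(X s)` is absolutely continuous with
a.e. derivative `-e^{-ρs} (ρ v(X s) - ⟨∇v(X s), g s⟩)`. The HJB equation turns the bracket into
`H(∇v(X s)) + ∑_{i∈F} c_i ∂_i v(X s)`, and the fundamental theorem of calculus for absolutely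
continuous functions gives the identity, once `∑_{i∈F} u(c_i)` is added and subtracted.
-/

open Matrix Finset MeasureTheory

noncomputable def dotCLM {n : ℕ} (p : Fin n → ℝ) : (Fin n → ℝ) →L[ℝ] ℝ :=
  LinearMap.toContinuousLinearMap
    { toFun := fun y => ∑ j, p j * y j
      map_add' := fun y z => by
        simp [Pi.add_apply, mul_add, Finset.sum_add_distrib]
      map_smul' := fun a y => by
        simp only [Pi.smul_apply, smul_eq_mul, RingHom.id_apply, Finset.mul_sum]
        exact Finset.sum_congr rfl fun j _ => by ring }

/-- The state equation is imposed in integral form; `(Dmat B + B)ᵀ = D + Bᵀ` since `D` is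
diagonal. -/
def Admissible {n : ℕ} (B : Matrix (Fin n) (Fin n) ℝ) (F : Finset (Fin n)) (φ : ℝ → ℝ)
    (x : Fin n → ℝ) (c X : ℝ → Fin n → ℝ) : Prop :=
  MeasureTheory.LocallyIntegrableOn c (Set.Ici 0) ∧
  (∀ᵐ t ∂(MeasureTheory.volume.restrict (Set.Ici (0 : ℝ))), ∀ i, 0 ≤ c t i) ∧
  (∀ t : ℝ, ∀ i, i ∉ F → c t i = 0) ∧
  ContinuousOn X (Set.Ici 0) ∧
  X 0 = x ∧
  (∀ t : ℝ, 0 ≤ t → ∀ i, 0 ≤ X t i) ∧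
  (∀ t : ℝ, 0 ≤ t →
    X t = x + ∫ s in (0:ℝ)..t, ((φ (∑ i, X s i)) • X s + (Dmat B + B)ᵀ *ᵥ X s - c s))

open Set Filter Topology

theorem Set.uIcc_subset_Ici_of_le {α : Type*} [LinearOrder α] {a b : α} (h : a ≤ b) :
    uIcc a b ⊆ Ici a := by
  rw [uIcc_of_le h]
  exact Icc_subset_Ici_self

namespace AbsolutelyContinuousOnInterval

variable {X Y : Type*} [PseudoMetricSpace X] [PseudoMetricSpace Y] {a b : ℝ}

theorem of_dist_le_mul {f : ℝ → X} {G : ℝ → Y} (hG : AbsolutelyContinuousOnInterval G a b)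
    (K : ℝ) (h : ∀ x ∈ uIcc a b, ∀ y ∈ uIcc a b, dist (f x) (f y) ≤ K * dist (G x) (G y)) :
    AbsolutelyContinuousOnInterval f a b := by
  have hK : Tendsto (fun E : ℕ × (ℕ → ℝ × ℝ) ↦
      K * ∑ i ∈ Finset.range E.1, dist (G (E.2 i).1) (G (E.2 i).2))
      (totalLengthFilter ⊓ 𝓟 (disjWithin a b)) (𝓝 0) := by
    simpa using Tendsto.const_mul K hG
  refine squeeze_zero' (Eventually.of_forall fun _ ↦ Finset.sum_nonneg fun _ _ ↦ dist_nonneg)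
    ?_ hK
  filter_upwards [eventually_inf_principal.mpr (Eventually.of_forall fun _ h ↦ h)] with E hE
  rw [Finset.mul_sum]
  exact Finset.sum_le_sum fun i hi ↦ h _ (hE.1 i hi).1 _ (hE.1 i hi).2

theorem integral_eq_sub_of_ae_hasDerivAt {f f' : ℝ → ℝ}
    (hf : AbsolutelyContinuousOnInterval f a b)
    (hf' : ∀ᵐ s, s ∈ uIcc a b → HasDerivAt f (f' s) s) :
    IntervalIntegrable f' volume a b ∧ ∫ s in a..b, f' s = f b - f a := by
  have hae : ∀ᵐ s, s ∈ uIoc a b → deriv f s = f' s := by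
    filter_upwards [hf'] with s hs hsI using (hs (uIoc_subset_uIcc hsI)).deriv
  refine ⟨(intervalIntegrable_congr_ae ?_).1 hf.intervalIntegrable_deriv, ?_⟩
  · exact (ae_restrict_iff' measurableSet_uIoc).2 hae
  · rw [← intervalIntegral.integral_congr_ae hae, hf.integral_deriv_eq_sub]

end AbsolutelyContinuousOnInterval

theorem LipschitzOnWith.comp_absolutelyContinuousOnInterval {X Y : Type*} [PseudoMetricSpace X]
    [PseudoMetricSpace Y] {φ : X → Y} {K : NNReal} {S : Set X} {f : ℝ → X} {a b : ℝ}
    (hφ : LipschitzOnWith K φ S) (hf : AbsolutelyContinuousOnInterval f a b)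
    (hfS : MapsTo f (uIcc a b) S) : AbsolutelyContinuousOnInterval (φ ∘ f) a b :=
  hf.of_dist_le_mul K fun _ hx _ hy ↦ hφ.dist_le_mul _ (hfS hx) _ (hfS hy)

theorem LocallyLipschitzOn.comp_absolutelyContinuousOnInterval {E Y : Type*}
    [SeminormedAddCommGroup E] [PseudoMetricSpace Y] {φ : E → Y} {S : Set E} {f : ℝ → E}
    {a b : ℝ} (hφ : LocallyLipschitzOn S φ) (hf : AbsolutelyContinuousOnInterval f a b)
    (hfS : MapsTo f (uIcc a b) S) : AbsolutelyContinuousOnInterval (φ ∘ f) a b := by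
  obtain ⟨K, hK⟩ := (hφ.mono (image_subset_iff.2 hfS)).exists_lipschitzOnWith_of_compact
    (isCompact_uIcc.image_of_continuousOn hf.continuousOn)
  exact hK.comp_absolutelyContinuousOnInterval hf (mapsTo_image f _)

theorem Convex.locallyLipschitzOn_of_hasFDerivAt {E F : Type*} [NormedAddCommGroup E]
    [NormedSpace ℝ E] [NormedAddCommGroup F] [NormedSpace ℝ F] {φ : E → F}
    {P : E → E →L[ℝ] F} {S : Set E} (hS : Convex ℝ S) (hφ : ∀ y ∈ S, HasFDerivAt φ (P y) y)
    (hP : ContinuousOn P S) : LocallyLipschitzOn S φ := fun _ hy ↦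
  hS.exists_nhdsWithin_lipschitzOnWith_of_hasFDerivWithinAt
    (eventually_nhdsWithin_of_forall fun z hz ↦ (hφ z hz).hasFDerivWithinAt) (hP _ hy)

section IntegralCurve

variable {E : Type*} [NormedAddCommGroup E] [NormedSpace ℝ E] {X g : ℝ → E} {a b : ℝ}

theorem absolutelyContinuousOnInterval_of_eq_add_integral (hg : IntervalIntegrable g volume a b)
    (hX : ∀ s ∈ uIcc a b, X s = X a + ∫ u in a..s, g u) :
    AbsolutelyContinuousOnInterval X a b := by
  have hsub : ∀ s ∈ uIcc a b, IntervalIntegrable g volume a s := fun s hs ↦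
    hg.mono_set (uIcc_subset_uIcc left_mem_uIcc hs)
  refine (hg.norm.absolutelyContinuousOnInterval_intervalIntegral left_mem_uIcc).of_dist_le_mul 1
    fun x hx y hy ↦ ?_
  rw [one_mul, dist_eq_norm, dist_eq_norm, hX x hx, hX y hy, add_sub_add_left_eq_sub,
    intervalIntegral.integral_interval_sub_left (hsub x hx) (hsub y hy),
    intervalIntegral.integral_interval_sub_left (hsub x hx).norm (hsub y hy).norm]
  exact intervalIntegral.norm_integral_le_abs_integral_norm

theorem ae_hasDerivAt_of_eq_add_integral [CompleteSpace E] (hg : IntervalIntegrable g volume a b)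
    (hX : ∀ s ∈ uIcc a b, X s = X a + ∫ u in a..s, g u) :
    ∀ᵐ s, s ∈ uIcc a b → HasDerivAt X (g s) s := by
  have hne : ∀ c : ℝ, ∀ᵐ s : ℝ, s ≠ c := fun c ↦ by simp [ae_iff, measure_singleton]
  filter_upwards [hg.ae_hasDerivAt_integral, hne a, hne b] with s hs hsa hsb hsI
  have hnhds : uIcc a b ∈ 𝓝 s := by
    rw [Set.uIcc, Set.mem_Icc] at hsI
    refine Icc_mem_nhds ?_ ?_ <;>
    · rcases le_total a b with h | h <;> simp_all [lt_iff_le_and_ne, eq_comm]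
  exact ((hs hsI a left_mem_uIcc).const_add (X a)).congr_of_eventuallyEq
    (eventually_of_mem hnhds hX)

end IntegralCurve

theorem exp_mul_comp_eq_integral_add {E : Type*} [NormedAddCommGroup E] [NormedSpace ℝ E]
    [CompleteSpace E] {v : E → ℝ} {P : E → E →L[ℝ] ℝ} {S : Set E} (hS : Convex ℝ S)
    (hv : ∀ y ∈ S, HasFDerivAt v (P y) y) (hP : ContinuousOn P S) {X g : ℝ → E} {a b : ℝ}
    (hg : IntervalIntegrable g volume a b) (hX : ∀ s ∈ uIcc a b, X s = X a + ∫ u in a..s, g u)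
    (hXS : MapsTo X (uIcc a b) S) (ρ : ℝ) :
    IntervalIntegrable (fun s ↦ Real.exp (-ρ * s) * (ρ * v (X s) - P (X s) (g s))) volume a b ∧
      Real.exp (-ρ * a) * v (X a) =
        (∫ s in a..b, Real.exp (-ρ * s) * (ρ * v (X s) - P (X s) (g s)))
          + Real.exp (-ρ * b) * v (X b) := by
  have hvX : AbsolutelyContinuousOnInterval (v ∘ X) a b :=
    (hS.locallyLipschitzOn_of_hasFDerivAt hv hP).comp_absolutelyContinuousOnInterval
      (absolutelyContinuousOnInterval_of_eq_add_integral hg hX) hXS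
  have hexp : ContDiff ℝ 1 fun s : ℝ ↦ Real.exp (-ρ * s) := by fun_prop
  have hΦ : ∀ᵐ s, s ∈ uIcc a b → HasDerivAt (fun s ↦ Real.exp (-ρ * s) * v (X s))
      (-(Real.exp (-ρ * s) * (ρ * v (X s) - P (X s) (g s)))) s := by
    filter_upwards [ae_hasDerivAt_of_eq_add_integral hg hX] with s hs hsI
    have hexp' : HasDerivAt (fun s : ℝ ↦ Real.exp (-ρ * s)) (-ρ * Real.exp (-ρ * s)) s := by
      simpa [mul_comm] using ((hasDerivAt_id s).const_mul (-ρ)).exp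
    have hvX' : HasDerivAt (fun s ↦ v (X s)) (P (X s) (g s)) s :=
      (hv _ (hXS hsI)).comp_hasDerivAt s (hs hsI)
    exact (hexp'.mul hvX').congr_deriv (by ring)
  obtain ⟨hint, heq⟩ :=
    (hexp.contDiffOn.absolutelyContinuousOnInterval.fun_mul hvX).integral_eq_sub_of_ae_hasDerivAt hΦ
  refine ⟨by simpa [Pi.neg_def] using hint.neg, ?_⟩
  rw [intervalIntegral.integral_neg] at heq
  simp only [Function.comp_apply] at heq
  linarith

theorem Real.rpow_le_one_add {x r : ℝ} (hx : 0 ≤ x) (hr0 : 0 ≤ r) (hr1 : r ≤ 1) :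
    x ^ r ≤ 1 + x := by
  have := rpow_one_add_le_one_add_mul_self (s := x - 1) (by linarith) hr0 hr1
  rw [add_sub_cancel] at this
  nlinarith

theorem MeasureTheory.Integrable.rpow_of_le_one {α : Type*} [MeasurableSpace α] {μ : Measure α}
    [IsFiniteMeasure μ] {f : α → ℝ} (hf : Integrable f μ) (hf0 : 0 ≤ᵐ[μ] f) {r : ℝ}
    (hr0 : 0 ≤ r) (hr1 : r ≤ 1) : Integrable (fun x ↦ f x ^ r) μ := by
  refine ((integrable_const 1).add hf).mono'
    ((Real.continuous_rpow_const hr0).comp_aestronglyMeasurable hf.aestronglyMeasurable) ?_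
  filter_upwards [hf0] with x hx
  rw [Real.norm_of_nonneg (Real.rpow_nonneg hx r)]
  exact Real.rpow_le_one_add hx hr0 hr1

theorem convex_setOf_nonneg_sum_pos {ι : Type*} [Fintype ι] :
    Convex ℝ {y : ι → ℝ | (∀ i, 0 ≤ y i) ∧ 0 < ∑ i, y i} :=
  (convex_Ici 0).inter <| convex_halfSpace_gt (f := fun y : ι → ℝ ↦ ∑ i, y i)
    ⟨fun _ _ ↦ Finset.sum_add_distrib, fun _ _ ↦ by simp [Finset.mul_sum]⟩ 0

@[simp]
theorem dotCLM_apply {n : ℕ} (p y : Fin n → ℝ) : dotCLM p y = ∑ j, p j * y j := rfl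

theorem continuous_dotCLM {n : ℕ} : Continuous (dotCLM : (Fin n → ℝ) → (Fin n → ℝ) →L[ℝ] ℝ) := by
  have : (dotCLM : (Fin n → ℝ) → _) = fun p ↦ ∑ j, p j • ContinuousLinearMap.proj j := by
    ext p y
    simp
  rw [this]
  fun_prop

noncomputable def drift {n : ℕ} (B : Matrix (Fin n) (Fin n) ℝ) (φ : ℝ → ℝ) (y : Fin n → ℝ) :
    Fin n → ℝ :=
  φ (∑ i, y i) • y + (Dmat B + B)ᵀ *ᵥ y

theorem continuousOn_drift {n : ℕ} (B : Matrix (Fin n) (Fin n) ℝ) {φ : ℝ → ℝ}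
    (hφ : ContinuousOn φ (Ioi 0)) :
    ContinuousOn (drift B φ) {y | 0 < ∑ i, y i} := by
  have hmass : Continuous fun y : Fin n → ℝ ↦ ∑ i, y i :=
    continuous_finsetSum _ fun i _ ↦ continuous_apply i
  exact ((hφ.comp hmass.continuousOn fun _ hy ↦ hy).smul continuousOn_id).add
    (continuous_const.matrix_mulVec continuous_id).continuousOn

theorem sub_dotCLM_drift_sub_eq {n : ℕ} {B : Matrix (Fin n) (Fin n) ℝ} {F : Finset (Fin n)}
    {φ : ℝ → ℝ} {ρ V Hq : ℝ} {q y w : Fin n → ℝ}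
    (hV : ρ * V = Hq + ∑ j, q j * ((Dmat B + B)ᵀ *ᵥ y) j + φ (∑ j, y j) * ∑ j, q j * y j)
    (hw : ∀ i ∉ F, w i = 0) :
    ρ * V - dotCLM q (drift B φ y - w) = Hq + ∑ i ∈ F, w i * q i := by
  have hwq : ∑ j, q j * w j = ∑ i ∈ F, w i * q i := by
    rw [← Finset.sum_subset (Finset.subset_univ F) fun j _ hj ↦ by simp [hw j hj]]
    exact Finset.sum_congr rfl fun _ _ ↦ mul_comm _ _
  simp only [drift, map_sub, map_add, map_smul, dotCLM_apply, smul_eq_mul, hwq]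
  linarith

namespace Admissible

variable {n : ℕ} {B : Matrix (Fin n) (Fin n) ℝ} {F : Finset (Fin n)} {φ : ℝ → ℝ}
  {x : Fin n → ℝ} {c X : ℝ → Fin n → ℝ} {t : ℝ}

theorem eq_add_integral_drift (h : Admissible B F φ x c X) (ht : 0 ≤ t) :
    ∀ s ∈ uIcc 0 t, X s = X 0 + ∫ u in (0 : ℝ)..s, (drift B φ (X u) - c u) := fun s hs ↦ by
  obtain ⟨-, -, -, -, hX0, -, hXeq⟩ := h
  rw [hXeq s (uIcc_subset_Ici_of_le ht hs), hX0]
  rfl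

theorem intervalIntegrable_drift_sub (h : Admissible B F φ x c X) (hφ : ContinuousOn φ (Ioi 0))
    (hXpos : ∀ s : ℝ, 0 ≤ s → 0 < ∑ i, X s i) (ht : 0 ≤ t) :
    IntervalIntegrable (fun s ↦ drift B φ (X s) - c s) volume 0 t := by
  obtain ⟨hc, -, -, hXcont, -, -, -⟩ := h
  refine ContinuousOn.intervalIntegrable ?_ |>.sub
    (hc.integrableOn_compact_subset (uIcc_subset_Ici_of_le ht) isCompact_uIcc).intervalIntegrable
  exact (continuousOn_drift B hφ).comp (hXcont.mono (uIcc_subset_Ici_of_le ht))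
    fun s hs ↦ hXpos s (uIcc_subset_Ici_of_le ht hs)

theorem intervalIntegrable_mul_sum_rpow_div (h : Admissible B F φ x c X) (ht : 0 ≤ t)
    {w : ℝ → ℝ} (hw : Continuous w) {r : ℝ} (hr0 : 0 ≤ r) (hr1 : r ≤ 1) (k : ℝ) :
    IntervalIntegrable (fun s ↦ w s * ∑ i ∈ F, c s i ^ r / k) volume 0 t := by
  obtain ⟨hc, hc0, -⟩ := h
  have : IsFiniteMeasure (volume.restrict (uIcc 0 t)) :=
    isFiniteMeasure_restrict.2 isCompact_uIcc.measure_lt_top.ne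
  have hc0' : ∀ᵐ s ∂volume.restrict (uIcc 0 t), ∀ i, 0 ≤ c s i :=
    ae_restrict_of_ae_restrict_of_subset (uIcc_subset_Ici_of_le ht) hc0
  have hc' := hc.integrableOn_compact_subset (uIcc_subset_Ici_of_le ht) isCompact_uIcc
  refine (IntegrableOn.continuousOn_mul hw.continuousOn ?_ isCompact_uIcc).intervalIntegrable
  exact integrable_finsetSum _ fun i _ ↦
    ((hc'.eval i).rpow_of_le_one (hc0'.mono fun s hs ↦ hs i) hr0 hr1).div_const k

end Admissible

theorem stmt17_general {n : ℕ} (B : Matrix (Fin n) (Fin n) ℝ)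
    (F : Finset (Fin n))
    (σ δ ρ : ℝ) (hσ0 : 0 < σ) (hσ1 : σ < 1)
    (v : (Fin n → ℝ) → ℝ) (p : (Fin n → ℝ) → Fin n → ℝ)
    (hderiv : ∀ y : Fin n → ℝ, (∀ i, 0 ≤ y i) → y ≠ 0 → HasFDerivAt v (dotCLM (p y)) y)
    (hpcont : ContinuousOn p {y : Fin n → ℝ | (∀ i, 0 ≤ y i) ∧ y ≠ 0})
    (hHJB : ∀ y : Fin n → ℝ, (∀ i, 0 ≤ y i) → y ≠ 0 →
      ρ * v y = (σ / (1 - σ)) * (∑ i ∈ F, (p y i) ^ (1 - 1 / σ))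
        + (∑ j, p y j * (((Dmat B + B)ᵀ *ᵥ y) j))
        + ((∑ j, y j) ^ (σ - 1) - δ) * (∑ j, p y j * y j))
    (x : Fin n → ℝ)
    (c X : ℝ → Fin n → ℝ)
    (hadm : Admissible B F (fun m => m ^ (σ - 1) - δ) x c X)
    (hXpos : ∀ s : ℝ, 0 ≤ s → 0 < ∑ i, X s i) :
    ∀ t : ℝ, 0 ≤ t →
      v x = (∫ s in (0:ℝ)..t, Real.exp (-ρ * s) *
              ((σ / (1 - σ)) * (∑ i ∈ F, (p (X s) i) ^ (1 - 1 / σ))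
                - ∑ i ∈ F, ((c s i) ^ (1 - σ) / (1 - σ) - c s i * p (X s) i)))
        + (∫ s in (0:ℝ)..t, Real.exp (-ρ * s) * ∑ i ∈ F, (c s i) ^ (1 - σ) / (1 - σ))
        + Real.exp (-ρ * t) * v (X t) := by
  intro t ht
  have ⟨_, _, hcF, _, hX0, hXnn, _⟩ := hadm
  set S := {y : Fin n → ℝ | (∀ i, 0 ≤ y i) ∧ 0 < ∑ i, y i}
  have hS : S ⊆ {y | (∀ i, 0 ≤ y i) ∧ y ≠ 0} := fun y hy ↦
    ⟨hy.1, fun h ↦ by simpa [h] using hy.2⟩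
  have hXS : MapsTo X (uIcc 0 t) S := fun s hs ↦
    ⟨hXnn s (uIcc_subset_Ici_of_le ht hs), hXpos s (uIcc_subset_Ici_of_le ht hs)⟩
  have hφ : ContinuousOn (fun m : ℝ ↦ m ^ (σ - 1) - δ) (Ioi 0) :=
    (continuousOn_id.rpow_const fun m hm ↦ .inl (ne_of_gt hm)).sub continuousOn_const
  obtain ⟨hint, hval⟩ := exp_mul_comp_eq_integral_add convex_setOf_nonneg_sum_pos
    (fun y hy ↦ hderiv y (hS hy).1 (hS hy).2)
    (continuous_dotCLM.comp_continuousOn (hpcont.mono hS))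
    (hadm.intervalIntegrable_drift_sub hφ hXpos ht) (hadm.eq_add_integral_drift ht) hXS ρ
  set I : ℝ → ℝ := fun s ↦ Real.exp (-ρ * s) *
    ((σ / (1 - σ)) * (∑ i ∈ F, (p (X s) i) ^ (1 - 1 / σ))
      - ∑ i ∈ F, ((c s i) ^ (1 - σ) / (1 - σ) - c s i * p (X s) i))
  set U : ℝ → ℝ := fun s ↦ Real.exp (-ρ * s) * ∑ i ∈ F, (c s i) ^ (1 - σ) / (1 - σ)
  have hintegrand : EqOn (fun s ↦ Real.exp (-ρ * s) *
      (ρ * v (X s) - dotCLM (p (X s)) (drift B (fun m ↦ m ^ (σ - 1) - δ) (X s) - c s)))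
      (fun s ↦ I s + U s) (uIcc 0 t) := fun s hs ↦ by
    obtain ⟨hy, hy0⟩ := hS (hXS hs)
    simp only [I, U, sub_dotCLM_drift_sub_eq (φ := fun m ↦ m ^ (σ - 1) - δ) (hHJB _ hy hy0)
      (hcF s), Finset.sum_sub_distrib]
    ring
  have hU : IntervalIntegrable U volume 0 t :=
    hadm.intervalIntegrable_mul_sum_rpow_div ht (by fun_prop) (by linarith) (by linarith) _
  have hI : IntervalIntegrable I volume 0 t := by
    simpa using (hint.congr (hintegrand.mono uIoc_subset_uIcc)).sub hU
  rw [hX0, mul_zero, Real.exp_zero, one_mul, intervalIntegral.integral_congr hintegrand,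
    intervalIntegral.integral_add hI hU] at hval
  exact hval

/-- The fundamental identity: any classical solution `v` of the planner's HJB equation in
framework (S2)(U1), with gradient `p`, satisfies, along any admissible pair `(c, X)` with
positive total mass, the identity
`v(x) = ∫₀ᵗ e^{−ρs}[H(∇v(X)) − h(c, ∇v(X))] ds + ∫₀ᵗ e^{−ρs} ∑_{i∈F} u(c_i) ds
 + e^{−ρt} v(X(t))` for every `t ≥ 0`. -/
theorem stmt17 {n : ℕ} (B : Matrix (Fin n) (Fin n) ℝ)
    (hB : ∀ i j, 0 ≤ B i j) (hdiag : ∀ i, B i i = 0)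
    (F : Finset (Fin n)) (hF : F.Nonempty)
    (σ δ ρ : ℝ) (hσ0 : 0 < σ) (hσ1 : σ < 1) (hδ : 0 < δ)
    (v : (Fin n → ℝ) → ℝ) (p : (Fin n → ℝ) → Fin n → ℝ)
    (hppos : ∀ y : Fin n → ℝ, (∀ i, 0 ≤ y i) → y ≠ 0 → ∀ i ∈ F, 0 < p y i)
    (hderiv : ∀ y : Fin n → ℝ, (∀ i, 0 ≤ y i) → y ≠ 0 → HasFDerivAt v (dotCLM (p y)) y)
    (hpcont : ContinuousOn p {y : Fin n → ℝ | (∀ i, 0 ≤ y i) ∧ y ≠ 0})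
    (hHJB : ∀ y : Fin n → ℝ, (∀ i, 0 ≤ y i) → y ≠ 0 →
      ρ * v y = (σ / (1 - σ)) * (∑ i ∈ F, (p y i) ^ (1 - 1 / σ))
        + (∑ j, p y j * (((Dmat B + B)ᵀ *ᵥ y) j))
        + ((∑ j, y j) ^ (σ - 1) - δ) * (∑ j, p y j * y j))
    (x : Fin n → ℝ) (hx : ∀ i, 0 ≤ x i) (hx0 : x ≠ 0)
    (c X : ℝ → Fin n → ℝ)
    (hadm : Admissible B F (fun m => m ^ (σ - 1) - δ) x c X)
    (hXpos : ∀ s : ℝ, 0 ≤ s → 0 < ∑ i, X s i) :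
    ∀ t : ℝ, 0 ≤ t →
      v x = (∫ s in (0:ℝ)..t, Real.exp (-ρ * s) *
              ((σ / (1 - σ)) * (∑ i ∈ F, (p (X s) i) ^ (1 - 1 / σ))
                - ∑ i ∈ F, ((c s i) ^ (1 - σ) / (1 - σ) - c s i * p (X s) i)))
        + (∫ s in (0:ℝ)..t, Real.exp (-ρ * s) * ∑ i ∈ F, (c s i) ^ (1 - σ) / (1 - σ))
        + Real.exp (-ρ * t) * v (X t) :=
  stmt17_general B F σ δ ρ hσ0 hσ1 v p hderiv hpcont hHJB x c X hadm hXpos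
end
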